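/- arXiv:2204.05028 — 2 statements merged into one kernel-verified Lean document; each statement's English description precedes it below -/
import Mathlib

section
/- (Consistency of the minimum density power divergence estimator for Markov process models.) Let (Ω, F, P) be a probability space, p ≥ 1, Θ an open subset of ℝᵖ, and θ_g ∈ Θ. For each i ≥ 1 let V_i : Ω × Θ → ℝ be jointly measurable such that for P-a.e. ω, the map θ ↦ V_i(ω, θ) is three times continuously differentiable on Θ, with all first, second, and third θ-partial derivatives at any fixed θ integrable in ω. Assume: (i) E[∂_j V_i(·, θ_g)] = 0 for all i ≥ 1 and j = 1, …, p; (ii) for each j there exist σ_{1,j} > 0 and c_{1,j} ∈ [0, 1) with |Cov(∂_j V_{i₁}(·, θ_g), ∂_j V_{i₂}(·, θ_g))| ≤ σ_{1,j}² c_{1,j}^{|i₁−i₂|} for all i₁, i₂, and E[(∂_j V_i(·, θ_g))²] < ∞; (iii) for each j, k there exist σ_{1,j,k} > 0 and c_{1,j,k} ∈ [0, 1) with |Cov(∂_{jk} V_{i₁}(·, θ_g), ∂_{jk} V_{i₂}(·, θ_g))| ≤ σ_{1,j,k}² c_{1,j,k}^{|i₁−i₂|} for all i₁, i₂, and E[(∂_{jk}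 V_i(·, θ_g))²] < ∞; (iv) there exist nonnegative measurable functions M_{jkl}^{(i)} on Ω with |∂_{jkl} V_i(ω, θ)| ≤ M_{jkl}^{(i)}(ω) for all θ ∈ Θ and a.e. ω, sup_n (1/n) Σ_{i=1}^n E[M_{jkl}^{(i)}] < ∞, E[(M_{jkl}^{(i)})²] < ∞, and |Cov(M_{jkl}^{(i₁)}, M_{jkl}^{(i₂)})| ≤ σ_{jkl}² c_{jkl}^{|i₁−i₂|} for some σ_{jkl} > 0 and c_{jkl} ∈ [0, 1); (v) each matrix J^{(i)} with entries J^{(i)}_{jk} = E[∂_{jk} V_i(·, θ_g)] is positive definite, and the infimum over n of the minimum eigenvalue of Ψ_n = (1/n) Σ_{i=1}^n J^{(i)} is some λ₀ > 0. Then for every sufficiently small a > 0 (with the closed ball of radius a around θ_g contained in Θ), P({ω : there exists θ ∈ Θ with ‖θ − θ_g‖ < a and Σ_{i=1}^n ∇_θ V_i(ω, θ) = 0}) → 1 as n → ∞. -/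
open MeasureTheory ProbabilityTheory Filter Finset

/-- First-order partial derivative `∂_j f(θ)` of `f : ℝᵖ → ℝ`. -/
noncomputable def pd1 {p : ℕ} (f : EuclideanSpace ℝ (Fin p) → ℝ)
    (θ : EuclideanSpace ℝ (Fin p)) (j : Fin p) : ℝ :=
  fderiv ℝ f θ (EuclideanSpace.single j 1)

/-- Second-order partial derivative `∂_{jk} f(θ)`. -/
noncomputable def pd2 {p : ℕ} (f : EuclideanSpace ℝ (Fin p) → ℝ)
    (θ : EuclideanSpace ℝ (Fin p)) (j k : Fin p) : ℝ :=
  fderiv ℝ (fun θ' => pd1 f θ' k) θ (EuclideanSpace.single j 1)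

/-- Third-order partial derivative `∂_{jkl} f(θ)`. -/
noncomputable def pd3 {p : ℕ} (f : EuclideanSpace ℝ (Fin p) → ℝ)
    (θ : EuclideanSpace ℝ (Fin p)) (j k l : Fin p) : ℝ :=
  fderiv ℝ (fun θ' => pd2 f θ' k l) θ (EuclideanSpace.single j 1)

open scoped ENNReal



section helpers
variable {p : ℕ}

lemma euclid_decomp (x : EuclideanSpace ℝ (Fin p)) :
    x = ∑ j : Fin p, x j • EuclideanSpace.single j (1:ℝ) := by
  ext k
  have h : (∑ j : Fin p, x j • EuclideanSpace.single j (1:ℝ)) k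
      = ∑ j : Fin p, (x j • EuclideanSpace.single j (1:ℝ)) k :=
    by rw [WithLp.ofLp_sum]; exact Finset.sum_apply k Finset.univ _
  rw [h]
  simp [EuclideanSpace.single_apply]

lemma clm_apply_eq_sum (L : EuclideanSpace ℝ (Fin p) →L[ℝ] ℝ) (x : EuclideanSpace ℝ (Fin p)) :
    L x = ∑ j, x j * L (EuclideanSpace.single j 1) := by
  conv_lhs => rw [euclid_decomp x]
  rw [map_sum]
  simp [smul_eq_mul]

lemma abs_coord_le_norm (x : EuclideanSpace ℝ (Fin p)) (j : Fin p) : |x j| ≤ ‖x‖ := by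
  rw [EuclideanSpace.norm_eq]
  have h1 : |x j| = Real.sqrt (‖x j‖^2) := by
    rw [Real.sqrt_sq_eq_abs]; simp
  rw [h1]
  apply Real.sqrt_le_sqrt
  exact Finset.single_le_sum (f := fun i => ‖x i‖^2) (fun i _ => by positivity) (Finset.mem_univ j)

lemma opNorm_le_sum_abs (L : EuclideanSpace ℝ (Fin p) →L[ℝ] ℝ) :
    ‖L‖ ≤ ∑ j, |L (EuclideanSpace.single j 1)| := by
  refine ContinuousLinearMap.opNorm_le_bound L (by positivity) fun x => ?_
  rw [clm_apply_eq_sum L x]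
  calc ‖∑ j, x j * L (EuclideanSpace.single j 1)‖
      ≤ ∑ j, ‖x j * L (EuclideanSpace.single j 1)‖ := norm_sum_le _ _
    _ ≤ ∑ j, ‖x‖ * |L (EuclideanSpace.single j 1)| := by
        refine Finset.sum_le_sum fun j _ => ?_
        rw [norm_mul]
        have := abs_coord_le_norm x j
        have h2 : (0:ℝ) ≤ ‖L (EuclideanSpace.single j 1)‖ := norm_nonneg _
        calc ‖x j‖ * ‖L (EuclideanSpace.single j 1)‖
            ≤ ‖x‖ * ‖L (EuclideanSpace.single j 1)‖ := by
              apply mul_le_mul_of_nonneg_right _ h2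
              simpa using this
          _ = ‖x‖ * |L (EuclideanSpace.single j 1)| := by rw [Real.norm_eq_abs]
    _ = (∑ j, |L (EuclideanSpace.single j 1)|) * ‖x‖ := by
        rw [Finset.sum_mul]
        exact Finset.sum_congr rfl fun j _ => mul_comm _ _

lemma geom_bound {c : ℝ} (hc0 : 0 ≤ c) (hc1 : c < 1) (m : ℕ) :
    ∑ k ∈ Finset.range m, c ^ k ≤ 1 / (1 - c) := by
  have h1 : (0:ℝ) < 1 - c := by linarith
  rw [geom_sum_eq (by linarith : c ≠ 1)]
  have h2 : (c^m - 1)/(c - 1) = (1 - c^m)/(1 - c) := by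
    rw [← neg_div_neg_eq]; ring_nf
  rw [h2]
  have hcm : (0:ℝ) ≤ c ^ m := by positivity
  apply div_le_div_of_nonneg_right ?_ h1.le
  linarith

lemma row_geom_bound {c : ℝ} (hc0 : 0 ≤ c) (hc1 : c < 1) (n i1 : ℕ)
    (h : i1 ∈ Finset.Icc 1 n) :
    ∑ i2 ∈ Finset.Icc 1 n, c ^ ((i1:ℤ) - (i2:ℤ)).natAbs ≤ 2 / (1 - c) := by
  classical
  have hmem := Finset.mem_Icc.mp h
  set s := Finset.Icc 1 n with hs
  have hsplit := Finset.sum_filter_add_sum_filter_not s (fun i2 => i2 ≤ i1)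
      (fun i2 => c ^ ((i1:ℤ) - (i2:ℤ)).natAbs)
  rw [← hsplit]
  have hbd : ∀ (t : Finset ℕ) (g : ℕ → ℕ), Set.InjOn g t →
      (∀ i2 ∈ t, ((i1:ℤ) - (i2:ℤ)).natAbs = g i2) → (∀ i2 ∈ t, g i2 ≤ n) →
      ∑ i2 ∈ t, c ^ ((i1:ℤ) - (i2:ℤ)).natAbs ≤ 1 / (1 - c) := by
    intro t g hinj hval hle
    have h1 : ∑ i2 ∈ t, c ^ ((i1:ℤ) - (i2:ℤ)).natAbs = ∑ i2 ∈ t, c ^ (g i2) :=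
      Finset.sum_congr rfl fun i2 hi2 => by rw [hval i2 hi2]
    rw [h1, ← Finset.sum_image (fun x hx y hy hxy => hinj hx hy hxy)]
    refine le_trans (Finset.sum_le_sum_of_subset_of_nonneg ?_ ?_) (geom_bound hc0 hc1 (n+1))
    · intro k hk
      rw [Finset.mem_image] at hk
      obtain ⟨i2, hi2, rfl⟩ := hk
      exact Finset.mem_range.mpr (Nat.lt_succ_of_le (hle i2 hi2))
    · intro k _ _; positivity
  have hb1 : ∑ i2 ∈ s.filter (fun i2 => i2 ≤ i1), c ^ ((i1:ℤ) - (i2:ℤ)).natAbs ≤ 1 / (1 - c) := by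
    refine hbd _ (fun i2 => i1 - i2) ?_ ?_ ?_
    · intro a ha b hb hab
      simp only [Finset.mem_coe, Finset.mem_filter, hs, Finset.mem_Icc] at ha hb
      dsimp only at hab
      omega
    · intro i2 hi2
      simp only [Finset.mem_filter, hs, Finset.mem_Icc] at hi2
      omega
    · intro i2 hi2
      simp only [Finset.mem_filter, hs, Finset.mem_Icc] at hi2
      omega
  have hb2 : ∑ i2 ∈ s.filter (fun i2 => ¬ i2 ≤ i1), c ^ ((i1:ℤ) - (i2:ℤ)).natAbs ≤ 1 / (1 - c) := by
    refine hbd _ (fun i2 => i2 - i1) ?_ ?_ ?_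
    · intro a ha b hb hab
      simp only [Finset.mem_coe, Finset.mem_filter, hs, Finset.mem_Icc] at ha hb
      dsimp only at hab
      omega
    · intro i2 hi2
      simp only [Finset.mem_filter, hs, Finset.mem_Icc] at hi2
      omega
    · intro i2 hi2
      simp only [Finset.mem_filter, hs, Finset.mem_Icc] at hi2
      omega
  have : 2 / (1 - c) = 1 / (1-c) + 1/(1-c) := by ring
  rw [this]
  exact add_le_add hb1 hb2

end helpers

section wlln
open scoped ENNReal
variable {Ω : Type*} [MeasurableSpace Ω]

lemma l2_mul_integrable {μ : Measure Ω} {f g : Ω → ℝ} (hf : MemLp f 2 μ) (hg : MemLp g 2 μ) :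
    Integrable (fun ω => f ω * g ω) μ := by
  have h := hf.smul (φ := g) hg (r := (1:ℝ≥0∞))
  rw [memLp_one_iff_integrable] at h
  refine h.congr (Filter.Eventually.of_forall fun ω => ?_)
  simp [Pi.smul_apply', smul_eq_mul, mul_comm]

lemma wlln {μ : Measure Ω} [IsProbabilityMeasure μ]
    (X : ℕ → Ω → ℝ) (m : ℕ → ℝ)
    (hL2 : ∀ i, 1 ≤ i → MemLp (X i) 2 μ)
    (hm : ∀ i, 1 ≤ i → ∫ ω, X i ω ∂μ = m i)
    (C c : ℝ) (hC : 0 ≤ C) (hc0 : 0 ≤ c) (hc1 : c < 1)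
    (hcov : ∀ i1 i2, 1 ≤ i1 → 1 ≤ i2 →
      |(∫ ω, X i1 ω * X i2 ω ∂μ) - (∫ ω, X i1 ω ∂μ) * (∫ ω, X i2 ω ∂μ)|
        ≤ C * c ^ ((i1:ℤ) - (i2:ℤ)).natAbs)
    (ε : ℝ) (hε : 0 < ε) :
    Filter.Tendsto (fun n : ℕ => μ {ω | (n:ℝ) * ε ≤
        |(∑ i ∈ Finset.Icc 1 n, X i ω) - ∑ i ∈ Finset.Icc 1 n, m i|}) Filter.atTop (nhds 0) := by
  classical
  set Y : ℕ → Ω → ℝ := fun i ω => X i ω - m i with hY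
  have hY2 : ∀ i, 1 ≤ i → MemLp (Y i) 2 μ := fun i hi =>
    (hL2 i hi).sub (memLp_const (m i))
  have hYint : ∀ i, 1 ≤ i → Integrable (Y i) μ :=
    fun i hi => (hY2 i hi).integrable (by norm_num)
  have hYmul : ∀ i1 i2, 1 ≤ i1 → 1 ≤ i2 → Integrable (fun ω => Y i1 ω * Y i2 ω) μ :=
    fun i1 i2 h1 h2 => l2_mul_integrable (hY2 i1 h1) (hY2 i2 h2)
  -- covariance identity
  have hYcov : ∀ i1 i2, 1 ≤ i1 → 1 ≤ i2 →
      |∫ ω, Y i1 ω * Y i2 ω ∂μ| ≤ C * c ^ ((i1:ℤ) - (i2:ℤ)).natAbs := by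
    intro i1 i2 h1 h2
    have hXmul : Integrable (fun ω => X i1 ω * X i2 ω) μ :=
      l2_mul_integrable (hL2 i1 h1) (hL2 i2 h2)
    have hX1 : Integrable (X i1) μ := (hL2 i1 h1).integrable (by norm_num)
    have hX2 : Integrable (X i2) μ := (hL2 i2 h2).integrable (by norm_num)
    have hexp : ∀ ω, Y i1 ω * Y i2 ω
        = X i1 ω * X i2 ω - m i1 * X i2 ω - m i2 * X i1 ω + m i1 * m i2 := by
      intro ω; simp only [hY]; ring
    have hint : ∫ ω, Y i1 ω * Y i2 ω ∂μ
        = (∫ ω, X i1 ω * X i2 ω ∂μ) - (∫ ω, X i1 ω ∂μ) * (∫ ω, X i2 ω ∂μ) := by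
      simp only [hexp]
      rw [integral_add, integral_sub, integral_sub]
      · rw [integral_const_mul, integral_const_mul, integral_const]
        rw [hm i1 h1, hm i2 h2]
        simp
        ring
      · exact hXmul
      · exact hX2.const_mul _
      · exact (hXmul.sub (hX2.const_mul _))
      · exact hX1.const_mul _
      · exact ((hXmul.sub (hX2.const_mul _)).sub (hX1.const_mul _))
      · exact integrable_const _
    rw [hint]
    exact hcov i1 i2 h1 h2
  set S : ℕ → Ω → ℝ := fun n ω => ∑ i ∈ Finset.Icc 1 n, Y i ω with hS
  set B : ℝ := C * (2 / (1 - c)) with hB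
  have hBnn : 0 ≤ B := by
    have : (0:ℝ) < 1 - c := by linarith
    positivity
  -- second moment bound
  have hSsq : ∀ n, Integrable (fun ω => (S n ω)^2) μ := by
    intro n
    have : MemLp (S n) 2 μ :=
      memLp_finsetSum (Finset.Icc 1 n) (fun i hi => hY2 i (Finset.mem_Icc.mp hi).1)
    exact this.integrable_sq
  have hmom : ∀ n, ∫ ω, (S n ω)^2 ∂μ ≤ B * n := by
    intro n
    have hexp : ∀ ω, (S n ω)^2 = ∑ i1 ∈ Finset.Icc 1 n, ∑ i2 ∈ Finset.Icc 1 n,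
        Y i1 ω * Y i2 ω := by
      intro ω
      rw [sq, Finset.sum_mul_sum]
    have hint1 : ∫ ω, (S n ω)^2 ∂μ = ∑ i1 ∈ Finset.Icc 1 n, ∑ i2 ∈ Finset.Icc 1 n,
        ∫ ω, Y i1 ω * Y i2 ω ∂μ := by
      simp only [hexp]
      rw [integral_finset_sum]
      · exact Finset.sum_congr rfl fun i1 hi1 => integral_finset_sum _
          (fun i2 hi2 => hYmul i1 i2 (Finset.mem_Icc.mp hi1).1 (Finset.mem_Icc.mp hi2).1)
      · intro i1 hi1
        exact integrable_finset_sum _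
          (fun i2 hi2 => hYmul i1 i2 (Finset.mem_Icc.mp hi1).1 (Finset.mem_Icc.mp hi2).1)
    rw [hint1]
    have hbound : ∑ i1 ∈ Finset.Icc 1 n, ∑ i2 ∈ Finset.Icc 1 n, ∫ ω, Y i1 ω * Y i2 ω ∂μ
        ≤ ∑ i1 ∈ Finset.Icc 1 n, (C * (2 / (1 - c))) := by
      refine Finset.sum_le_sum fun i1 hi1 => ?_
      calc ∑ i2 ∈ Finset.Icc 1 n, ∫ ω, Y i1 ω * Y i2 ω ∂μ
          ≤ ∑ i2 ∈ Finset.Icc 1 n, C * c ^ ((i1:ℤ) - (i2:ℤ)).natAbs := by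
            refine Finset.sum_le_sum fun i2 hi2 => ?_
            exact le_trans (le_abs_self _)
              (hYcov i1 i2 (Finset.mem_Icc.mp hi1).1 (Finset.mem_Icc.mp hi2).1)
        _ = C * ∑ i2 ∈ Finset.Icc 1 n, c ^ ((i1:ℤ) - (i2:ℤ)).natAbs := by
            rw [Finset.mul_sum]
        _ ≤ C * (2 / (1 - c)) := by
            apply mul_le_mul_of_nonneg_left (row_geom_bound hc0 hc1 n i1 hi1) hC
    calc ∑ i1 ∈ Finset.Icc 1 n, ∑ i2 ∈ Finset.Icc 1 n, ∫ ω, Y i1 ω * Y i2 ω ∂μ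
        ≤ ∑ i1 ∈ Finset.Icc 1 n, (C * (2 / (1 - c))) := hbound
      _ = (Finset.Icc 1 n).card * (C * (2 / (1 - c))) := by rw [Finset.sum_const, nsmul_eq_mul]
      _ ≤ B * n := by
          rw [Nat.card_Icc]
          simp only [hB]
          have : (n + 1 - 1 : ℕ) = n := by omega
          rw [this]
          ring_nf
          exact le_refl _
  -- Markov bound
  have hMark : ∀ n : ℕ, 1 ≤ n → μ {ω | (n:ℝ) * ε ≤
      |(∑ i ∈ Finset.Icc 1 n, X i ω) - ∑ i ∈ Finset.Icc 1 n, m i|}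
      ≤ ENNReal.ofReal ((B / ε^2) * (1/n)) := by
    intro n hn
    have hnR : (0:ℝ) < n := by exact_mod_cast hn
    have hsetsub : {ω | (n:ℝ) * ε ≤ |(∑ i ∈ Finset.Icc 1 n, X i ω) - ∑ i ∈ Finset.Icc 1 n, m i|}
        ⊆ {ω | ((n:ℝ)*ε)^2 ≤ (S n ω)^2} := by
      intro ω hω
      simp only [Set.mem_setOf_eq] at hω ⊢
      have hSeq : S n ω = (∑ i ∈ Finset.Icc 1 n, X i ω) - ∑ i ∈ Finset.Icc 1 n, m i := by
        simp only [hS, hY, Finset.sum_sub_distrib]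
      rw [hSeq]
      have h2 : ((n:ℝ)*ε)^2 ≤ |(∑ i ∈ Finset.Icc 1 n, X i ω) - ∑ i ∈ Finset.Icc 1 n, m i| ^ 2 :=
        pow_le_pow_left₀ (by positivity) hω 2
      rwa [sq_abs] at h2
    refine le_trans (measure_mono hsetsub) ?_
    have hmark := mul_meas_ge_le_integral_of_nonneg
      (f := fun ω => (S n ω)^2) (Filter.Eventually.of_forall (fun ω => by positivity))
      (hSsq n) (((n:ℝ)*ε)^2)
    have hne : μ {ω | ((n:ℝ)*ε)^2 ≤ (S n ω)^2} ≠ ⊤ := measure_ne_top μ _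
    rw [← ENNReal.ofReal_toReal hne]
    apply ENNReal.ofReal_le_ofReal
    have ht : (0:ℝ) < ((n:ℝ)*ε)^2 := by positivity
    have h1 : (μ {ω | ((n:ℝ)*ε)^2 ≤ (S n ω)^2}).toReal ≤ (B * n) / (((n:ℝ)*ε)^2) := by
      rw [le_div_iff₀ ht]
      calc (μ {ω | ((n:ℝ)*ε)^2 ≤ (S n ω)^2}).toReal * ((n:ℝ)*ε)^2
          = ((n:ℝ)*ε)^2 * (μ {x | ((n:ℝ)*ε)^2 ≤ (S n x)^2}).toReal := by ring
        _ ≤ ∫ ω, (S n ω)^2 ∂μ := hmark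
        _ ≤ B * n := hmom n
    refine h1.trans ?_
    have : (B * n) / (((n:ℝ)*ε)^2) = (B / ε^2) * (1/n) * (n / n) := by
      field_simp
    rw [this, div_self (ne_of_gt hnR), mul_one]
  -- conclude
  have htend : Filter.Tendsto (fun n : ℕ => ENNReal.ofReal ((B / ε^2) * (1/n)))
      Filter.atTop (nhds 0) := by
    have h0 : Filter.Tendsto (fun n : ℕ => (B / ε^2) * (1/(n:ℝ))) Filter.atTop (nhds 0) := by
      have := tendsto_one_div_atTop_nhds_zero_nat (𝕜 := ℝ)
      have h2 := this.const_mul (B / ε^2)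
      simpa using h2
    have := ENNReal.tendsto_ofReal h0
    simpa using this
  refine tendsto_of_tendsto_of_tendsto_of_le_of_le' tendsto_const_nhds htend ?_ ?_
  · exact Filter.Eventually.of_forall fun n => zero_le
  · filter_upwards [Filter.eventually_ge_atTop 1] with n hn
    exact hMark n hn

end wlln

section smooth
variable {p : ℕ}

lemma pd1_contDiffAt {f : EuclideanSpace ℝ (Fin p) → ℝ} {θ : EuclideanSpace ℝ (Fin p)}
    (h : ContDiffAt ℝ 3 f θ) (k : Fin p) :
    ContDiffAt ℝ 2 (fun θ' => pd1 f θ' k) θ := by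
  have h1 : ContDiffAt ℝ 2 (fderiv ℝ f) θ := h.fderiv_right (by norm_num)
  have h2 := (ContinuousLinearMap.apply ℝ ℝ
    (EuclideanSpace.single k (1:ℝ))).contDiff.comp_contDiffAt θ h1
  have heq : (fun θ' => pd1 f θ' k)
      = (⇑(ContinuousLinearMap.apply ℝ ℝ (EuclideanSpace.single k (1:ℝ))) ∘ fderiv ℝ f) := by
    funext θ'; rfl
  rw [heq]; exact h2

lemma pd2_contDiffAt {f : EuclideanSpace ℝ (Fin p) → ℝ} {θ : EuclideanSpace ℝ (Fin p)}
    (h : ContDiffAt ℝ 3 f θ) (k l : Fin p) :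
    ContDiffAt ℝ 1 (fun θ' => pd2 f θ' k l) θ := by
  have h1 : ContDiffAt ℝ 1 (fderiv ℝ (fun θ' => pd1 f θ' l)) θ :=
    (pd1_contDiffAt h l).fderiv_right (by norm_num)
  have h2 := (ContinuousLinearMap.apply ℝ ℝ
    (EuclideanSpace.single k (1:ℝ))).contDiff.comp_contDiffAt θ h1
  have heq : (fun θ' => pd2 f θ' k l)
      = (⇑(ContinuousLinearMap.apply ℝ ℝ (EuclideanSpace.single k (1:ℝ)))
          ∘ fderiv ℝ (fun θ' => pd1 f θ' l)) := by
    funext θ'; rfl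
  rw [heq]; exact h2

lemma hasDerivAt_line {g : EuclideanSpace ℝ (Fin p) → ℝ} {θ0 u : EuclideanSpace ℝ (Fin p)} {t : ℝ}
    (hdiff : DifferentiableAt ℝ g (θ0 + t • u)) :
    HasDerivAt (fun s : ℝ => g (θ0 + s • u))
      (∑ j, u j * fderiv ℝ g (θ0 + t • u) (EuclideanSpace.single j 1)) t := by
  have hline : HasDerivAt (fun s : ℝ => θ0 + s • u) u t := by
    simpa using ((hasDerivAt_id t).smul_const u).const_add θ0
  have hcomp := hdiff.hasFDerivAt.comp_hasDerivAt t hline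
  have heq : fderiv ℝ g (θ0 + t • u) u
      = ∑ j, u j * fderiv ℝ g (θ0 + t • u) (EuclideanSpace.single j 1) :=
    clm_apply_eq_sum _ u
  rw [heq] at hcomp
  exact hcomp

variable {Θ : Set (EuclideanSpace ℝ (Fin p))} {θ : EuclideanSpace ℝ (Fin p)}
  {ι : Type*} {s : Finset ι} {g : ι → EuclideanSpace ℝ (Fin p) → ℝ}

lemma pd1_sum (hΘ : IsOpen Θ) (hg : ∀ i ∈ s, ∀ θ' ∈ Θ, ContDiffAt ℝ 3 (g i) θ')
    (hθ : θ ∈ Θ) (k : Fin p) :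
    pd1 (fun x => ∑ i ∈ s, g i x) θ k = ∑ i ∈ s, pd1 (g i) θ k := by
  have hd : HasFDerivAt (fun x => ∑ i ∈ s, g i x) (∑ i ∈ s, fderiv ℝ (g i) θ) θ :=
    HasFDerivAt.fun_sum fun i hi =>
      (((hg i hi θ hθ).differentiableAt (by norm_num)).hasFDerivAt)
  rw [pd1, hd.fderiv]
  rw [ContinuousLinearMap.sum_apply]
  rfl

lemma pd2_sum (hΘ : IsOpen Θ) (hg : ∀ i ∈ s, ∀ θ' ∈ Θ, ContDiffAt ℝ 3 (g i) θ')
    (hθ : θ ∈ Θ) (k l : Fin p) :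
    pd2 (fun x => ∑ i ∈ s, g i x) θ k l = ∑ i ∈ s, pd2 (g i) θ k l := by
  have hev : (fun θ' => pd1 (fun x => ∑ i ∈ s, g i x) θ' l) =ᶠ[nhds θ]
      (fun θ' => ∑ i ∈ s, pd1 (g i) θ' l) := by
    filter_upwards [hΘ.mem_nhds hθ] with θ' hθ'
    exact pd1_sum hΘ hg hθ' l
  rw [pd2, hev.fderiv_eq]
  have hd : HasFDerivAt (fun θ' => ∑ i ∈ s, pd1 (g i) θ' l)
      (∑ i ∈ s, fderiv ℝ (fun θ' => pd1 (g i) θ' l) θ) θ :=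
    HasFDerivAt.fun_sum fun i hi =>
      ((pd1_contDiffAt (hg i hi θ hθ) l).differentiableAt (by norm_num)).hasFDerivAt
  rw [hd.fderiv, ContinuousLinearMap.sum_apply]
  rfl

lemma pd3_sum (hΘ : IsOpen Θ) (hg : ∀ i ∈ s, ∀ θ' ∈ Θ, ContDiffAt ℝ 3 (g i) θ')
    (hθ : θ ∈ Θ) (k l m : Fin p) :
    pd3 (fun x => ∑ i ∈ s, g i x) θ k l m = ∑ i ∈ s, pd3 (g i) θ k l m := by
  have hev : (fun θ' => pd2 (fun x => ∑ i ∈ s, g i x) θ' l m) =ᶠ[nhds θ]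
      (fun θ' => ∑ i ∈ s, pd2 (g i) θ' l m) := by
    filter_upwards [hΘ.mem_nhds hθ] with θ' hθ'
    exact pd2_sum hΘ hg hθ' l m
  rw [pd3, hev.fderiv_eq]
  have hd : HasFDerivAt (fun θ' => ∑ i ∈ s, pd2 (g i) θ' l m)
      (∑ i ∈ s, fderiv ℝ (fun θ' => pd2 (g i) θ' l m) θ) θ :=
    HasFDerivAt.fun_sum fun i hi =>
      ((pd2_contDiffAt (hg i hi θ hθ) l m).differentiableAt (by norm_num)).hasFDerivAt
  rw [hd.fderiv, ContinuousLinearMap.sum_apply]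
  rfl

end smooth

section keydet
variable {p : ℕ}

lemma key_det (hp : 1 ≤ p) {Θ : Set (EuclideanSpace ℝ (Fin p))} (hΘ : IsOpen Θ)
    {θg : EuclideanSpace ℝ (Fin p)} {f : EuclideanSpace ℝ (Fin p) → ℝ}
    (hf : ∀ θ ∈ Θ, ContDiffAt ℝ 3 f θ)
    {a ε lam T : ℝ} (ha : 0 < a) (hball : Metric.closedBall θg a ⊆ Θ)
    (hεpos : 0 ≤ ε) (hlam : 0 < lam) (hT : 0 ≤ T)
    {Ψ : Fin p → Fin p → ℝ}
    (hΨ : ∀ x : EuclideanSpace ℝ (Fin p), lam * ‖x‖^2 ≤ ∑ j, ∑ k, Ψ j k * x j * x k)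
    (hgrad : ∀ j, |pd1 f θg j| ≤ ε)
    (hhess : ∀ j k, |pd2 f θg j k - Ψ j k| ≤ ε)
    (hthird : ∀ θ ∈ Metric.closedBall θg a, ∀ j k l, |pd3 f θ j k l| ≤ T)
    (hc1 : ε * p^2 ≤ lam/4) (hc2 : a * (p^3 * T) ≤ lam/4) (hc3 : ε * p ≤ lam * a / 8) :
    ∃ θ ∈ Θ, ‖θ - θg‖ < a ∧ ∀ j, pd1 f θ j = 0 := by
  classical
  have hθg : θg ∈ Θ := hball (Metric.mem_closedBall_self ha.le)
  have hpR : (1:ℝ) ≤ p := by exact_mod_cast hp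
  -- Hessian entry deviation on the closed ball
  have hhessball : ∀ θ ∈ Metric.closedBall θg a, ∀ j k,
      |pd2 f θ j k - Ψ j k| ≤ ε + a * ((p:ℝ) * T) := by
    intro θ hθmem j k
    have hdiff : ∀ x ∈ Metric.closedBall θg a,
        DifferentiableAt ℝ (fun θ' => pd2 f θ' j k) x :=
      fun x hx => (pd2_contDiffAt (hf x (hball hx)) j k).differentiableAt (by norm_num)
    have hbound : ∀ x ∈ Metric.closedBall θg a,
        ‖fderiv ℝ (fun θ' => pd2 f θ' j k) x‖ ≤ (p:ℝ) * T := by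
      intro x hx
      refine le_trans (opNorm_le_sum_abs _) ?_
      have h1 : ∀ l : Fin p,
          |fderiv ℝ (fun θ' => pd2 f θ' j k) x (EuclideanSpace.single l 1)| ≤ T :=
        fun l => hthird x hx l j k
      calc ∑ l, |fderiv ℝ (fun θ' => pd2 f θ' j k) x (EuclideanSpace.single l 1)|
          ≤ ∑ _l : Fin p, T := Finset.sum_le_sum fun l _ => h1 l
        _ = (p:ℝ) * T := by simp [Finset.card_univ, mul_comm]
    have hmvt := Convex.norm_image_sub_le_of_norm_fderiv_le hdiff hbound
      (convex_closedBall θg a) (Metric.mem_closedBall_self ha.le) hθmem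
    have hdist : ‖θ - θg‖ ≤ a := by
      rw [← dist_eq_norm]; exact Metric.mem_closedBall.mp hθmem
    have h2 : |pd2 f θ j k - pd2 f θg j k| ≤ ((p:ℝ)*T) * a := by
      calc |pd2 f θ j k - pd2 f θg j k| ≤ ((p:ℝ)*T) * ‖θ - θg‖ := hmvt
        _ ≤ ((p:ℝ)*T) * a := by
            apply mul_le_mul_of_nonneg_left hdist (by positivity)
    have h3 := hhess j k
    calc |pd2 f θ j k - Ψ j k|
        = |(pd2 f θ j k - pd2 f θg j k) + (pd2 f θg j k - Ψ j k)| := by ring_nf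
      _ ≤ |pd2 f θ j k - pd2 f θg j k| + |pd2 f θg j k - Ψ j k| := abs_add_le _ _
      _ ≤ ((p:ℝ)*T) * a + ε := add_le_add h2 h3
      _ = ε + a * ((p:ℝ)*T) := by ring
  -- Quadratic form lower bound on the closed ball
  have hquad : ∀ θ ∈ Metric.closedBall θg a, ∀ x : EuclideanSpace ℝ (Fin p),
      (lam/2) * ‖x‖^2 ≤ ∑ j, x j * ∑ k, x k * pd2 f θ k j := by
    intro θ hθmem x
    have h1 : ∑ j, x j * ∑ k, x k * pd2 f θ k j
        = ∑ j, ∑ k, pd2 f θ j k * x j * x k := by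
      simp_rw [Finset.mul_sum]
      rw [Finset.sum_comm]
      exact Finset.sum_congr rfl fun j _ => Finset.sum_congr rfl fun k _ => by ring
    rw [h1]
    have hsplit : ∀ j k : Fin p, pd2 f θ j k * x j * x k
        = Ψ j k * x j * x k + (pd2 f θ j k - Ψ j k) * x j * x k := fun j k => by ring
    have h2 : ∑ j, ∑ k, pd2 f θ j k * x j * x k
        = (∑ j, ∑ k, Ψ j k * x j * x k)
          + ∑ j, ∑ k, (pd2 f θ j k - Ψ j k) * x j * x k := by
      rw [← Finset.sum_add_distrib]
      refine Finset.sum_congr rfl fun j _ => ?_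
      rw [← Finset.sum_add_distrib]
      exact Finset.sum_congr rfl fun k _ => hsplit j k
    rw [h2]
    have hdev : |∑ j, ∑ k, (pd2 f θ j k - Ψ j k) * x j * x k|
        ≤ (ε + a * ((p:ℝ)*T)) * ((p:ℝ)^2 * ‖x‖^2) := by
      calc |∑ j, ∑ k, (pd2 f θ j k - Ψ j k) * x j * x k|
          ≤ ∑ j, |∑ k, (pd2 f θ j k - Ψ j k) * x j * x k| :=
            Finset.abs_sum_le_sum_abs _ _
        _ ≤ ∑ j : Fin p, ∑ k : Fin p, |(pd2 f θ j k - Ψ j k) * x j * x k| :=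
            Finset.sum_le_sum fun j _ => Finset.abs_sum_le_sum_abs _ _
        _ ≤ ∑ j : Fin p, ∑ k : Fin p, (ε + a * ((p:ℝ)*T)) * (‖x‖ * ‖x‖) := by
            refine Finset.sum_le_sum fun j _ => Finset.sum_le_sum fun k _ => ?_
            rw [abs_mul, abs_mul]
            have hb1 := hhessball θ hθmem j k
            have hb2 := abs_coord_le_norm x j
            have hb3 := abs_coord_le_norm x k
            have hb0 : (0:ℝ) ≤ ε + a * ((p:ℝ)*T) :=
              le_trans (abs_nonneg _) hb1
            calc |pd2 f θ j k - Ψ j k| * |x j| * |x k|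
                ≤ (ε + a * ((p:ℝ)*T)) * |x j| * |x k| := by
                  apply mul_le_mul_of_nonneg_right
                    (mul_le_mul_of_nonneg_right hb1 (abs_nonneg _)) (abs_nonneg _)
              _ ≤ (ε + a * ((p:ℝ)*T)) * ‖x‖ * ‖x‖ := by
                  apply mul_le_mul
                  · exact mul_le_mul_of_nonneg_left hb2 hb0
                  · exact hb3
                  · exact abs_nonneg _
                  · positivity
              _ = (ε + a * ((p:ℝ)*T)) * (‖x‖ * ‖x‖) := by ring
        _ = (ε + a * ((p:ℝ)*T)) * ((p:ℝ)^2 * ‖x‖^2) := by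
            rw [Finset.sum_const, Finset.sum_const]
            simp [Finset.card_univ]
            ring
    have hΨx := hΨ x
    have hkey : (ε + a * ((p:ℝ)*T)) * ((p:ℝ)^2 * ‖x‖^2) ≤ (lam/2) * ‖x‖^2 := by
      have hx2 : (0:ℝ) ≤ ‖x‖^2 := by positivity
      have hexpand : (ε + a * ((p:ℝ)*T)) * ((p:ℝ)^2 * ‖x‖^2)
          = (ε * (p:ℝ)^2 + a * ((p:ℝ)^3 * T)) * ‖x‖^2 := by ring
      rw [hexpand]
      have : ε * (p:ℝ)^2 + a * ((p:ℝ)^3 * T) ≤ lam/2 := by linarith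
      exact mul_le_mul_of_nonneg_right this hx2
    have habs := abs_le.mp hdev
    linarith
  -- Boundary increase
  have hbdry : ∀ u : EuclideanSpace ℝ (Fin p), ‖u‖ = a →
      f θg + lam * a^2 / 8 ≤ f (θg + u) := by
    intro u hu
    have hmemγ : ∀ t : ℝ, t ∈ Set.Icc (0:ℝ) 1 → θg + t • u ∈ Metric.closedBall θg a := by
      intro t ht
      rw [Metric.mem_closedBall, dist_eq_norm]
      have : θg + t • u - θg = t • u := by abel
      rw [this, norm_smul, hu]
      calc ‖t‖ * a = |t| * a := by rw [Real.norm_eq_abs]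
        _ ≤ 1 * a := by
            apply mul_le_mul_of_nonneg_right _ ha.le
            rw [abs_le]; constructor <;> linarith [ht.1, ht.2]
        _ = a := one_mul a
    set G : ℝ → ℝ := fun t => ∑ j, u j * pd1 f (θg + t • u) j with hG
    set Q : ℝ → ℝ := fun t => ∑ j, u j * ∑ k, u k * pd2 f (θg + t • u) k j with hQ
    -- derivative of t ↦ f(γ t)
    have hg' : ∀ t ∈ Set.Icc (0:ℝ) 1, HasDerivAt (fun s : ℝ => f (θg + s • u)) (G t) t := by
      intro t ht
      exact hasDerivAt_line ((hf _ (hball (hmemγ t ht))).differentiableAt (by norm_num))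
    -- derivative of G
    have hG' : ∀ t ∈ Set.Icc (0:ℝ) 1, HasDerivAt G (Q t) t := by
      intro t ht
      apply HasDerivAt.fun_sum
      intro j _
      have hd : DifferentiableAt ℝ (fun θ' => pd1 f θ' j) (θg + t • u) :=
        (pd1_contDiffAt (hf _ (hball (hmemγ t ht))) j).differentiableAt (by norm_num)
      exact (hasDerivAt_line hd).const_mul (u j)
    -- Q t ≥ β
    set β : ℝ := lam/2 * a^2 with hβ
    have hQβ : ∀ t ∈ Set.Icc (0:ℝ) 1, β ≤ Q t := by
      intro t ht
      have := hquad _ (hmemγ t ht) u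
      rw [hu] at this
      calc β = lam/2 * a^2 := rfl
        _ ≤ Q t := this
    -- ψ := G - G 0 - β t is nonneg on Icc
    have hmono1 : ∀ t ∈ Set.Icc (0:ℝ) 1, G 0 + β * t ≤ G t := by
      intro t ht
      set ψ : ℝ → ℝ := fun t => G t - G 0 - β * t with hψ
      have hψd : ∀ s ∈ Set.Icc (0:ℝ) 1, HasDerivAt ψ (Q s - β) s := by
        intro s hs
        have h1 := (hG' s hs).sub_const (G 0)
        have h2 : HasDerivAt (fun t : ℝ => β * t) β s := by
          simpa using (hasDerivAt_id s).const_mul β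
        simpa [hψ, sub_sub] using h1.fun_sub h2
      have hm : MonotoneOn ψ (Set.Icc 0 1) := by
        apply monotoneOn_of_deriv_nonneg (convex_Icc 0 1)
        · intro s hs
          exact (hψd s hs).continuousAt.continuousWithinAt
        · intro s hs
          rw [interior_Icc] at hs
          exact ((hψd s (Set.mem_Icc_of_Ioo hs)).differentiableAt).differentiableWithinAt
        · intro s hs
          rw [interior_Icc] at hs
          rw [(hψd s (Set.mem_Icc_of_Ioo hs)).deriv]
          linarith [hQβ s (Set.mem_Icc_of_Ioo hs)]
      have h0 : ψ 0 = 0 := by simp [hψ]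
      have := hm (Set.left_mem_Icc.mpr zero_le_one) ht ht.1
      rw [h0] at this
      simp only [hψ] at this
      linarith
    -- φ := f(γ t) - f θg - G 0 t - β t²/2 is nonneg at 1
    have hφfinal : f θg + G 0 + β/2 ≤ f (θg + u) := by
      set φ : ℝ → ℝ := fun t => f (θg + t • u) - G 0 * t - β * t^2/2 with hφ
      have hφd : ∀ s ∈ Set.Icc (0:ℝ) 1, HasDerivAt φ (G s - G 0 - β * s) s := by
        intro s hs
        have h1 := hg' s hs
        have h2 : HasDerivAt (fun t : ℝ => G 0 * t) (G 0) s := by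
          simpa using (hasDerivAt_id s).const_mul (G 0)
        have h3 : HasDerivAt (fun t : ℝ => β * t^2/2) (β * s) s := by
          have := ((hasDerivAt_pow 2 s).const_mul β).div_const 2
          simpa using this.congr_deriv (by ring)
        simpa [hφ] using (h1.fun_sub h2).fun_sub h3
      have hm : MonotoneOn φ (Set.Icc 0 1) := by
        apply monotoneOn_of_deriv_nonneg (convex_Icc 0 1)
        · intro s hs
          exact (hφd s hs).continuousAt.continuousWithinAt
        · intro s hs
          rw [interior_Icc] at hs
          exact ((hφd s (Set.mem_Icc_of_Ioo hs)).differentiableAt).differentiableWithinAt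
        · intro s hs
          rw [interior_Icc] at hs
          rw [(hφd s (Set.mem_Icc_of_Ioo hs)).deriv]
          linarith [hmono1 s (Set.mem_Icc_of_Ioo hs)]
      have h01 := hm (Set.left_mem_Icc.mpr zero_le_one)
        (Set.right_mem_Icc.mpr zero_le_one) zero_le_one
      simp only [hφ] at h01
      have hzero : θg + (0:ℝ) • u = θg := by simp
      have hone : θg + (1:ℝ) • u = θg + u := by simp
      rw [hzero, hone] at h01
      -- h01 : f θg - 0 - 0 ≤ f (θg+u) - G 0 - β/2
      have : f θg ≤ f (θg + u) - G 0 * 1 - β * 1^2/2 := by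
        calc f θg = f θg - G 0 * 0 - β * 0^2/2 := by ring
          _ ≤ _ := h01
      linarith
    -- bound G 0
    have hG0 : -(ε * (p:ℝ) * a) ≤ G 0 := by
      have habs : |G 0| ≤ ε * (p:ℝ) * a := by
        calc |G 0| ≤ ∑ j, |u j * pd1 f (θg + (0:ℝ) • u) j| := Finset.abs_sum_le_sum_abs _ _
          _ ≤ ∑ _j : Fin p, a * ε := by
              refine Finset.sum_le_sum fun j _ => ?_
              rw [abs_mul]
              have h1 : |u j| ≤ a := hu ▸ abs_coord_le_norm u j
              have h2 : |pd1 f (θg + (0:ℝ) • u) j| ≤ ε := by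
                have hzero : θg + (0:ℝ) • u = θg := by simp
                rw [hzero]; exact hgrad j
              exact mul_le_mul h1 h2 (abs_nonneg _) ha.le
          _ = (p:ℝ) * (a * ε) := by simp [Finset.card_univ]
          _ = ε * (p:ℝ) * a := by ring
      linarith [(abs_le.mp habs).1]
    have hc3' : ε * (p:ℝ) * a ≤ lam * a^2 / 8 := by
      calc ε * (p:ℝ) * a ≤ (lam * a / 8) * a := by
            apply mul_le_mul_of_nonneg_right hc3 ha.le
        _ = lam * a^2 / 8 := by ring
    have hβhalf : β / 2 = lam * a^2 / 4 := by rw [hβ]; ring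
    linarith
  -- Minimum on the closed ball
  have hcomp : IsCompact (Metric.closedBall θg a) := isCompact_closedBall θg a
  have hcont : ContinuousOn f (Metric.closedBall θg a) :=
    fun x hx => ((hf x (hball hx)).continuousAt).continuousWithinAt
  obtain ⟨θm, hθm, hmin⟩ := hcomp.exists_isMinOn
    ⟨θg, Metric.mem_closedBall_self ha.le⟩ hcont
  have hmin_le : f θm ≤ f θg := hmin (Metric.mem_closedBall_self ha.le)
  have hlt : ‖θm - θg‖ < a := by
    by_contra hge
    push_neg at hge
    have hle : ‖θm - θg‖ ≤ a := by
      rw [← dist_eq_norm]; exact Metric.mem_closedBall.mp hθm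
    have heq : ‖θm - θg‖ = a := le_antisymm hle hge
    have hb := hbdry (θm - θg) heq
    have : θg + (θm - θg) = θm := by abel
    rw [this] at hb
    have hpos : 0 < lam * a^2 / 8 := by positivity
    linarith
  have hnhds : Metric.closedBall θg a ∈ nhds θm := by
    apply Filter.mem_of_superset (Metric.isOpen_ball.mem_nhds ?_) Metric.ball_subset_closedBall
    rw [Metric.mem_ball, dist_eq_norm]
    exact hlt
  have hlocal : IsLocalMin f θm := hmin.isLocalMin hnhds
  have hfd := hlocal.fderiv_eq_zero
  refine ⟨θm, hball hθm, hlt, fun j => ?_⟩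
  rw [pd1, hfd]
  rfl

end keydet

set_option maxHeartbeats 2000000

/-- **Consistency of the minimum density power divergence estimator for Markov process
models.** Under the paper's assumptions (A2), (A4), (M1), (M2) — abstracted as random
functions `V_i : Ω × Θ → ℝ` — for every sufficiently small `a > 0` with the closed ball
of radius `a` around `θ_g` contained in `Θ`, the probability that the minimum DPD
estimating equations `∑_{i=1}^n ∇_θ V_i(·, θ) = 0` have a root `θ` with `‖θ - θ_g‖ < a`
tends to `1` as `n → ∞`. -/
theorem stmt_10 {Ω : Type*} [MeasurableSpace Ω] (μ : Measure Ω) [IsProbabilityMeasure μ]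
    (p : ℕ) (hp : 1 ≤ p)
    (Θ : Set (EuclideanSpace ℝ (Fin p))) (hΘopen : IsOpen Θ)
    (θg : EuclideanSpace ℝ (Fin p)) (hθg : θg ∈ Θ)
    (V : ℕ → Ω → EuclideanSpace ℝ (Fin p) → ℝ)
    -- joint measurability
    (hVmeas : ∀ i, Measurable (Function.uncurry (V i)))
    -- a.s. three times continuous differentiability in θ on Θ
    (hsmooth : ∀ i, ∀ᵐ ω ∂μ, ∀ θ ∈ Θ, ContDiffAt ℝ 3 (V i ω) θ)
    -- integrability of all partial derivatives at any fixed θ ∈ Θ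
    (hint1 : ∀ i, ∀ θ ∈ Θ, ∀ j : Fin p, Integrable (fun ω => pd1 (V i ω) θ j) μ)
    (hint2 : ∀ i, ∀ θ ∈ Θ, ∀ j k : Fin p, Integrable (fun ω => pd2 (V i ω) θ j k) μ)
    (hint3 : ∀ i, ∀ θ ∈ Θ, ∀ j k l : Fin p, Integrable (fun ω => pd3 (V i ω) θ j k l) μ)
    -- (i) `E[∂_j V_i(·, θ_g)] = 0`
    (hgrad0 : ∀ i : ℕ, 1 ≤ i → ∀ j : Fin p, ∫ ω, pd1 (V i ω) θg j ∂μ = 0)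
    -- (ii) geometric covariance decay of the first partial derivatives at θ_g
    (hcov1 : ∀ j : Fin p, ∃ σ1 c1 : ℝ, 0 < σ1 ∧ 0 ≤ c1 ∧ c1 < 1 ∧
      (∀ i : ℕ, 1 ≤ i → MemLp (fun ω => pd1 (V i ω) θg j) 2 μ) ∧
      ∀ i1 i2 : ℕ, 1 ≤ i1 → 1 ≤ i2 →
        |(∫ ω, pd1 (V i1 ω) θg j * pd1 (V i2 ω) θg j ∂μ)
            - (∫ ω, pd1 (V i1 ω) θg j ∂μ) * (∫ ω, pd1 (V i2 ω) θg j ∂μ)|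
          ≤ σ1 ^ 2 * c1 ^ ((i1 : ℤ) - (i2 : ℤ)).natAbs)
    -- (iii) geometric covariance decay of the second partial derivatives at θ_g
    (hcov2 : ∀ j k : Fin p, ∃ σ2 c2 : ℝ, 0 < σ2 ∧ 0 ≤ c2 ∧ c2 < 1 ∧
      (∀ i : ℕ, 1 ≤ i → MemLp (fun ω => pd2 (V i ω) θg j k) 2 μ) ∧
      ∀ i1 i2 : ℕ, 1 ≤ i1 → 1 ≤ i2 →
        |(∫ ω, pd2 (V i1 ω) θg j k * pd2 (V i2 ω) θg j k ∂μ)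
            - (∫ ω, pd2 (V i1 ω) θg j k ∂μ) * (∫ ω, pd2 (V i2 ω) θg j k ∂μ)|
          ≤ σ2 ^ 2 * c2 ^ ((i1 : ℤ) - (i2 : ℤ)).natAbs)
    -- (iv) dominating functions for the third partial derivatives
    (M : Fin p → Fin p → Fin p → ℕ → Ω → ℝ)
    (hMmeas : ∀ j k l i, Measurable (M j k l i))
    (hMnonneg : ∀ j k l i ω, 0 ≤ M j k l i ω)
    (hMdom : ∀ j k l : Fin p, ∀ i : ℕ, 1 ≤ i →
      ∀ᵐ ω ∂μ, ∀ θ ∈ Θ, |pd3 (V i ω) θ j k l| ≤ M j k l i ω)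
    (hMbdd : ∀ j k l : Fin p, ∃ K : ℝ, ∀ n : ℕ, 1 ≤ n →
      (1 / (n : ℝ)) * ∑ i ∈ Finset.Icc 1 n, ∫ ω, M j k l i ω ∂μ ≤ K)
    (hML2 : ∀ j k l : Fin p, ∀ i : ℕ, 1 ≤ i → MemLp (M j k l i) 2 μ)
    (hMcov : ∀ j k l : Fin p, ∃ σM cM : ℝ, 0 < σM ∧ 0 ≤ cM ∧ cM < 1 ∧
      ∀ i1 i2 : ℕ, 1 ≤ i1 → 1 ≤ i2 →
        |(∫ ω, M j k l i1 ω * M j k l i2 ω ∂μ)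
            - (∫ ω, M j k l i1 ω ∂μ) * (∫ ω, M j k l i2 ω ∂μ)|
          ≤ σM ^ 2 * cM ^ ((i1 : ℤ) - (i2 : ℤ)).natAbs)
    -- (v) positive definiteness of J^{(i)} and uniform lower bound λ₀ on the minimum
    -- eigenvalue of Ψ_n = (1/n) ∑_{i=1}^n J^{(i)}
    (hJpos : ∀ i : ℕ, 1 ≤ i →
      Matrix.PosDef (Matrix.of fun j k : Fin p => ∫ ω, pd2 (V i ω) θg j k ∂μ))
    (lam0 : ℝ) (hlam0 : 0 < lam0)
    (hΨ : ∀ n : ℕ, 1 ≤ n → ∀ x : EuclideanSpace ℝ (Fin p),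
      lam0 * ‖x‖ ^ 2 ≤ ∑ j : Fin p, ∑ k : Fin p,
        ((1 / (n : ℝ)) * ∑ i ∈ Finset.Icc 1 n, ∫ ω, pd2 (V i ω) θg j k ∂μ) * x j * x k) :
    ∃ a0 : ℝ, 0 < a0 ∧ ∀ a : ℝ, 0 < a → a ≤ a0 → Metric.closedBall θg a ⊆ Θ →
      Tendsto (fun n : ℕ => μ {ω : Ω | ∃ θ ∈ Θ, ‖θ - θg‖ < a ∧
          ∀ j : Fin p, (∑ i ∈ Finset.Icc 1 n, pd1 (V i ω) θ j) = 0}) atTop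
        (nhds 1) := by
  
  classical
  have hpR : (1:ℝ) ≤ (p:ℝ) := by exact_mod_cast hp
  have hpR0 : (0:ℝ) < (p:ℝ) := by linarith
  -- constants from hMbdd
  set K : Fin p → Fin p → Fin p → ℝ := fun j k l => max (Classical.choose (hMbdd j k l)) 0
    with hKdef
  have hKspec : ∀ j k l : Fin p, ∀ n : ℕ, 1 ≤ n →
      (1 / (n:ℝ)) * ∑ i ∈ Finset.Icc 1 n, ∫ ω, M j k l i ω ∂μ ≤ K j k l := fun j k l n hn =>
    le_trans (Classical.choose_spec (hMbdd j k l) n hn) (le_max_left _ _)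
  have hKnonneg : ∀ j k l : Fin p, 0 ≤ K j k l := fun j k l => le_max_right _ _
  set KB : ℝ := ∑ j : Fin p, ∑ k : Fin p, ∑ l : Fin p, (K j k l + 1) with hKBdef
  have hterm : ∀ j' k' l' : Fin p, (0:ℝ) ≤ K j' k' l' + 1 := fun j' k' l' => by
    linarith [hKnonneg j' k' l']
  have hKB_ge : ∀ j k l : Fin p, K j k l + 1 ≤ KB := by
    intro j k l
    calc K j k l + 1 ≤ ∑ l' : Fin p, (K j k l' + 1) :=
          Finset.single_le_sum (fun l' _ => hterm j k l') (Finset.mem_univ l)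
      _ ≤ ∑ k' : Fin p, ∑ l' : Fin p, (K j k' l' + 1) :=
          Finset.single_le_sum (f := fun k' => ∑ l' : Fin p, (K j k' l' + 1))
            (fun k' _ => Finset.sum_nonneg fun l' _ => hterm j k' l') (Finset.mem_univ k)
      _ ≤ KB :=
          Finset.single_le_sum (f := fun j' => ∑ k' : Fin p, ∑ l' : Fin p, (K j' k' l' + 1))
            (fun j' _ => Finset.sum_nonneg fun k' _ =>
              Finset.sum_nonneg fun l' _ => hterm j' k' l') (Finset.mem_univ j)
  have hj0 : 0 < p := hp
  set j0 : Fin p := ⟨0, hj0⟩ with hj0def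
  have hKB1 : (1:ℝ) ≤ KB := by
    have := hKB_ge j0 j0 j0
    have := hKnonneg j0 j0 j0
    linarith
  have hKBpos : (0:ℝ) < KB := by linarith
  refine ⟨lam0 / (4 * (p:ℝ)^3 * KB), by positivity, ?_⟩
  intro a ha haa0 hball
  set ε₀ : ℝ := min (lam0/(4*(p:ℝ)^2)) (lam0*a/(8*(p:ℝ))) with hε₀def
  have hε₀pos : 0 < ε₀ := lt_min (by positivity) (by positivity)
  -- the target sets
  set Tgt : ℕ → Set Ω := fun n => {ω : Ω | ∃ θ ∈ Θ, ‖θ - θg‖ < a ∧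
      ∀ j : Fin p, (∑ i ∈ Finset.Icc 1 n, pd1 (V i ω) θ j) = 0} with hTgtdef
  -- bad sets
  set B1 : Fin p → ℕ → Set Ω := fun j n => {ω | (n:ℝ) * ε₀ ≤
      |(∑ i ∈ Finset.Icc 1 n, pd1 (V i ω) θg j) - ∑ i ∈ Finset.Icc 1 n, (0:ℝ)|} with hB1def
  set B2 : Fin p → Fin p → ℕ → Set Ω := fun j k n => {ω | (n:ℝ) * ε₀ ≤
      |(∑ i ∈ Finset.Icc 1 n, pd2 (V i ω) θg j k)
        - ∑ i ∈ Finset.Icc 1 n, ∫ ω', pd2 (V i ω') θg j k ∂μ|} with hB2def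
  set B3 : Fin p → Fin p → Fin p → ℕ → Set Ω := fun j k l n => {ω | (n:ℝ) * 1 ≤
      |(∑ i ∈ Finset.Icc 1 n, M j k l i ω)
        - ∑ i ∈ Finset.Icc 1 n, ∫ ω', M j k l i ω' ∂μ|} with hB3def
  have hB1t : ∀ j, Tendsto (fun n => μ (B1 j n)) atTop (nhds 0) := by
    intro j
    obtain ⟨σ1, c1, hσ, hc0, hc1lt, hL2m, hcv⟩ := hcov1 j
    have h := wlln (μ := μ) (fun i ω => pd1 (V i ω) θg j) (fun _ => (0:ℝ)) hL2m
      (fun i hi => hgrad0 i hi j) (σ1^2) c1 (sq_nonneg σ1) hc0 hc1lt hcv ε₀ hε₀pos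
    rw [hB1def]
    exact h
  have hB2t : ∀ j k, Tendsto (fun n => μ (B2 j k n)) atTop (nhds 0) := by
    intro j k
    obtain ⟨σ2, c2, hσ, hc0, hc1lt, hL2m, hcv⟩ := hcov2 j k
    have h := wlln (μ := μ) (fun i ω => pd2 (V i ω) θg j k)
      (fun i => ∫ ω', pd2 (V i ω') θg j k ∂μ) hL2m
      (fun i _ => rfl) (σ2^2) c2 (sq_nonneg σ2) hc0 hc1lt hcv ε₀ hε₀pos
    rw [hB2def]
    exact h
  have hB3t : ∀ j k l, Tendsto (fun n => μ (B3 j k l n)) atTop (nhds 0) := by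
    intro j k l
    obtain ⟨σM, cM, hσ, hc0, hc1lt, hcv⟩ := hMcov j k l
    have h := wlln (μ := μ) (fun i ω => M j k l i ω)
      (fun i => ∫ ω', M j k l i ω' ∂μ) (fun i hi => hML2 j k l i hi)
      (fun i _ => rfl) (σM^2) cM (sq_nonneg σM) hc0 hc1lt hcv 1 one_pos
    rw [hB3def]
    exact h
  set F : ℕ → ℝ≥0∞ := fun n => (∑ j : Fin p, μ (B1 j n))
      + ((∑ j : Fin p, ∑ k : Fin p, μ (B2 j k n))
        + (∑ j : Fin p, ∑ k : Fin p, ∑ l : Fin p, μ (B3 j k l n))) with hFdef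
  have hFt : Tendsto F atTop (nhds 0) := by
    have t1 : Tendsto (fun n => ∑ j : Fin p, μ (B1 j n)) atTop
        (nhds (∑ _j : Fin p, (0:ℝ≥0∞))) :=
      tendsto_finset_sum _ (fun j _ => hB1t j)
    have t2 : Tendsto (fun n => ∑ j : Fin p, ∑ k : Fin p, μ (B2 j k n)) atTop
        (nhds (∑ _j : Fin p, ∑ _k : Fin p, (0:ℝ≥0∞))) :=
      tendsto_finset_sum _ (fun j _ => tendsto_finset_sum _ (fun k _ => hB2t j k))
    have t3 : Tendsto (fun n => ∑ j : Fin p, ∑ k : Fin p, ∑ l : Fin p, μ (B3 j k l n)) atTop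
        (nhds (∑ _j : Fin p, ∑ _k : Fin p, ∑ _l : Fin p, (0:ℝ≥0∞))) :=
      tendsto_finset_sum _ (fun j _ => tendsto_finset_sum _
        (fun k _ => tendsto_finset_sum _ (fun l _ => hB3t j k l)))
    have := t1.add (t2.add t3)
    rw [hFdef]
    simpa using this
  -- the good event a.e.
  have hgoodae : ∀ᵐ ω ∂μ, (∀ i, ∀ θ ∈ Θ, ContDiffAt ℝ 3 (V i ω) θ) ∧
      (∀ i, 1 ≤ i → ∀ θ ∈ Θ, ∀ j k l : Fin p, |pd3 (V i ω) θ j k l| ≤ M j k l i ω) := by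
    have h1 : ∀ᵐ ω ∂μ, ∀ i, ∀ θ ∈ Θ, ContDiffAt ℝ 3 (V i ω) θ := ae_all_iff.mpr hsmooth
    have h2 : ∀ᵐ ω ∂μ, ∀ i, 1 ≤ i → ∀ θ ∈ Θ, ∀ j k l : Fin p,
        |pd3 (V i ω) θ j k l| ≤ M j k l i ω := by
      rw [ae_all_iff]
      intro i
      by_cases hi : 1 ≤ i
      · have := ae_all_iff.mpr fun j : Fin p => ae_all_iff.mpr fun k : Fin p =>
          ae_all_iff.mpr fun l : Fin p => hMdom j k l i hi
        filter_upwards [this] with ω hω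
        intro _ θ hθ j k l
        exact hω j k l θ hθ
      · exact Filter.Eventually.of_forall fun ω h => absurd h hi
    exact h1.and h2
  set Pg : Set Ω := {ω | (∀ i, ∀ θ ∈ Θ, ContDiffAt ℝ 3 (V i ω) θ) ∧
      (∀ i, 1 ≤ i → ∀ θ ∈ Θ, ∀ j k l : Fin p, |pd3 (V i ω) θ j k l| ≤ M j k l i ω)} with hPgdef
  have hPgc : μ Pgᶜ = 0 := by
    rw [hPgdef, Set.compl_setOf]
    exact ae_iff.mp hgoodae
  -- the inclusion
  have hincl : ∀ n : ℕ, 1 ≤ n → ∀ ω, ω ∈ Pg →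
      (∀ j, ω ∉ B1 j n) → (∀ j k, ω ∉ B2 j k n) → (∀ j k l, ω ∉ B3 j k l n) →
      ω ∈ Tgt n := by
    intro n hn ω hPgω hnb1 hnb2 hnb3
    have hnR : (0:ℝ) < n := by exact_mod_cast hn
    have hgood1 : ∀ i, ∀ θ ∈ Θ, ContDiffAt ℝ 3 (V i ω) θ := hPgω.1
    have hgood2 := hPgω.2
    have hcd : ∀ i ∈ Finset.Icc 1 n, ∀ θ' ∈ Θ, ContDiffAt ℝ 3 (V i ω) θ' :=
      fun i _ θ' hθ' => hgood1 i θ' hθ'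
    have hg1 : ∀ j, |∑ i ∈ Finset.Icc 1 n, pd1 (V i ω) θg j| ≤ (n:ℝ) * ε₀ := by
      intro j
      have h := hnb1 j
      rw [hB1def] at h
      simp only [Set.mem_setOf_eq, not_le, Finset.sum_const_zero, sub_zero] at h
      exact h.le
    have hg2 : ∀ j k, |(∑ i ∈ Finset.Icc 1 n, pd2 (V i ω) θg j k)
        - ∑ i ∈ Finset.Icc 1 n, ∫ ω', pd2 (V i ω') θg j k ∂μ| ≤ (n:ℝ) * ε₀ := by
      intro j k
      have h := hnb2 j k
      rw [hB2def] at h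
      simp only [Set.mem_setOf_eq, not_le] at h
      exact h.le
    have hg3 : ∀ j k l, ∑ i ∈ Finset.Icc 1 n, M j k l i ω ≤ (n:ℝ) * KB := by
      intro j k l
      have h := hnb3 j k l
      rw [hB3def] at h
      simp only [Set.mem_setOf_eq, not_le, mul_one] at h
      have h2 := (abs_lt.mp h).2
      have hsumEM : ∑ i ∈ Finset.Icc 1 n, ∫ ω', M j k l i ω' ∂μ ≤ (n:ℝ) * K j k l := by
        have hKs := hKspec j k l n hn
        have h3 := mul_le_mul_of_nonneg_left hKs hnR.le
        have hne : (n:ℝ) ≠ 0 := ne_of_gt hnR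
        calc ∑ i ∈ Finset.Icc 1 n, ∫ ω', M j k l i ω' ∂μ
            = (n:ℝ) * ((1/(n:ℝ)) * ∑ i ∈ Finset.Icc 1 n, ∫ ω', M j k l i ω' ∂μ) := by
              field_simp
          _ ≤ (n:ℝ) * K j k l := h3
      have hKBn := hKB_ge j k l
      have hlt : ∑ i ∈ Finset.Icc 1 n, M j k l i ω < (n:ℝ) * KB := by
        calc ∑ i ∈ Finset.Icc 1 n, M j k l i ω
            < (∑ i ∈ Finset.Icc 1 n, ∫ ω', M j k l i ω' ∂μ) + (n:ℝ) := by linarith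
          _ ≤ (n:ℝ) * K j k l + (n:ℝ) := by linarith
          _ = (n:ℝ) * (K j k l + 1) := by ring
          _ ≤ (n:ℝ) * KB := mul_le_mul_of_nonneg_left hKBn hnR.le
      exact hlt.le
    set f : EuclideanSpace ℝ (Fin p) → ℝ := fun θ => ∑ i ∈ Finset.Icc 1 n, V i ω θ with hfdef
    have hfC3 : ∀ θ ∈ Θ, ContDiffAt ℝ 3 f θ := fun θ hθ =>
      ContDiffAt.sum fun i _ => hgood1 i θ hθ
    have hgrad' : ∀ j, |pd1 f θg j| ≤ (n:ℝ) * ε₀ := by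
      intro j
      rw [hfdef, pd1_sum hΘopen hcd hθg j]
      exact hg1 j
    have hhess' : ∀ j k, |pd2 f θg j k
        - (∑ i ∈ Finset.Icc 1 n, ∫ ω', pd2 (V i ω') θg j k ∂μ)| ≤ (n:ℝ)*ε₀ := by
      intro j k
      rw [hfdef, pd2_sum hΘopen hcd hθg j k]
      exact hg2 j k
    have hthird' : ∀ θ ∈ Metric.closedBall θg a, ∀ j k l, |pd3 f θ j k l| ≤ (n:ℝ) * KB := by
      intro θ hθmem j k l
      rw [hfdef, pd3_sum hΘopen hcd (hball hθmem) j k l]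
      calc |∑ i ∈ Finset.Icc 1 n, pd3 (V i ω) θ j k l|
          ≤ ∑ i ∈ Finset.Icc 1 n, |pd3 (V i ω) θ j k l| := Finset.abs_sum_le_sum_abs _ _
        _ ≤ ∑ i ∈ Finset.Icc 1 n, M j k l i ω := Finset.sum_le_sum (fun i hi =>
            hgood2 i (Finset.mem_Icc.mp hi).1 θ (hball hθmem) j k l)
        _ ≤ (n:ℝ) * KB := hg3 j k l
    have hΨn : ∀ x : EuclideanSpace ℝ (Fin p), ((n:ℝ)*lam0) * ‖x‖^2 ≤
        ∑ j, ∑ k, (∑ i ∈ Finset.Icc 1 n, ∫ ω', pd2 (V i ω') θg j k ∂μ) * x j * x k := by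
      intro x
      have h0 := hΨ n hn x
      have hne : (n:ℝ) ≠ 0 := ne_of_gt hnR
      calc ((n:ℝ)*lam0) * ‖x‖^2 = (n:ℝ) * (lam0 * ‖x‖^2) := by ring
        _ ≤ (n:ℝ) * ∑ j, ∑ k, ((1/(n:ℝ)) * ∑ i ∈ Finset.Icc 1 n,
              ∫ ω', pd2 (V i ω') θg j k ∂μ) * x j * x k :=
            mul_le_mul_of_nonneg_left h0 hnR.le
        _ = ∑ j, ∑ k, (∑ i ∈ Finset.Icc 1 n, ∫ ω', pd2 (V i ω') θg j k ∂μ) * x j * x k := by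
            rw [Finset.mul_sum]
            refine Finset.sum_congr rfl fun j _ => ?_
            rw [Finset.mul_sum]
            refine Finset.sum_congr rfl fun k _ => ?_
            field_simp
    have hc1' : ((n:ℝ)*ε₀) * (p:ℝ)^2 ≤ ((n:ℝ)*lam0)/4 := by
      have h : ε₀ ≤ lam0/(4*(p:ℝ)^2) := by
        rw [hε₀def]; exact min_le_left _ _
      calc ((n:ℝ)*ε₀) * (p:ℝ)^2 ≤ ((n:ℝ)*(lam0/(4*(p:ℝ)^2))) * (p:ℝ)^2 := by
            have h5 : (n:ℝ)*ε₀ ≤ (n:ℝ)*(lam0/(4*(p:ℝ)^2)) := mul_le_mul_of_nonneg_left h hnR.le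
            exact mul_le_mul_of_nonneg_right h5 (by positivity)
        _ = ((n:ℝ)*lam0)/4 := by field_simp
    have hc2' : a * ((p:ℝ)^3 * ((n:ℝ)*KB)) ≤ ((n:ℝ)*lam0)/4 := by
      have hpos : (0:ℝ) < (p:ℝ)^3 * ((n:ℝ)*KB) := by
        apply mul_pos (by positivity) (mul_pos hnR hKBpos)
      calc a * ((p:ℝ)^3 * ((n:ℝ)*KB)) ≤ (lam0 / (4*(p:ℝ)^3*KB)) * ((p:ℝ)^3 * ((n:ℝ)*KB)) :=
            mul_le_mul_of_nonneg_right haa0 hpos.le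
        _ = ((n:ℝ)*lam0)/4 := by
            field_simp
    have hc3' : ((n:ℝ)*ε₀) * (p:ℝ) ≤ ((n:ℝ)*lam0) * a / 8 := by
      have h : ε₀ ≤ lam0*a/(8*(p:ℝ)) := by
        rw [hε₀def]; exact min_le_right _ _
      calc ((n:ℝ)*ε₀) * (p:ℝ) ≤ ((n:ℝ)*(lam0*a/(8*(p:ℝ)))) * (p:ℝ) := by
            have h5 : (n:ℝ)*ε₀ ≤ (n:ℝ)*(lam0*a/(8*(p:ℝ))) := mul_le_mul_of_nonneg_left h hnR.le
            exact mul_le_mul_of_nonneg_right h5 hpR0.le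
        _ = ((n:ℝ)*lam0) * a / 8 := by field_simp
    obtain ⟨θm, hθmΘ, hθmlt, hθmgrad⟩ := key_det hp hΘopen hfC3 ha hball
      (mul_nonneg hnR.le hε₀pos.le) (mul_pos hnR hlam0) (mul_nonneg hnR.le hKBpos.le)
      (Ψ := fun j k => ∑ i ∈ Finset.Icc 1 n, ∫ ω', pd2 (V i ω') θg j k ∂μ)
      hΨn hgrad' hhess' hthird' hc1' hc2' hc3'
    rw [hTgtdef]
    refine ⟨θm, hθmΘ, hθmlt, fun j => ?_⟩
    have hz := hθmgrad j
    rw [hfdef, pd1_sum hΘopen hcd hθmΘ j] at hz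
    exact hz
  -- measure bookkeeping
  have hBadle : ∀ n : ℕ, μ ((⋃ j, B1 j n) ∪ ((⋃ j, ⋃ k, B2 j k n)
      ∪ (⋃ j, ⋃ k, ⋃ l, B3 j k l n))) ≤ F n := by
    intro n
    refine le_trans (measure_union_le _ _) ?_
    rw [hFdef]
    refine add_le_add ?_ (le_trans (measure_union_le _ _) (add_le_add ?_ ?_))
    · refine le_trans (measure_iUnion_le _) ?_
      rw [tsum_fintype]
    · refine le_trans (measure_iUnion_le _) ?_
      rw [tsum_fintype]
      exact Finset.sum_le_sum fun j _ => le_trans (measure_iUnion_le _) (by rw [tsum_fintype])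
    · refine le_trans (measure_iUnion_le _) ?_
      rw [tsum_fintype]
      refine Finset.sum_le_sum fun j _ => ?_
      refine le_trans (measure_iUnion_le _) ?_
      rw [tsum_fintype]
      exact Finset.sum_le_sum fun k _ => le_trans (measure_iUnion_le _) (by rw [tsum_fintype])
  have hmain : ∀ n : ℕ, 1 ≤ n → 1 - F n ≤ μ (Tgt n) := by
    intro n hn
    set A : Set Ω := Pg ∩ ((⋃ j, B1 j n) ∪ ((⋃ j, ⋃ k, B2 j k n)
      ∪ (⋃ j, ⋃ k, ⋃ l, B3 j k l n)))ᶜ with hAdef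
    have hsub : A ⊆ Tgt n := by
      intro ω hω
      obtain ⟨hPgω, hnb⟩ := hω
      simp only [Set.mem_union, Set.mem_iUnion, Set.mem_compl_iff, not_or, not_exists] at hnb
      exact hincl n hn ω hPgω (fun j => hnb.1 j) (fun j k => hnb.2.1 j k)
        (fun j k l => hnb.2.2 j k l)
    have h2 : (1:ℝ≥0∞) ≤ μ A + μ Aᶜ := by
      rw [← measure_univ (μ := μ), ← Set.union_compl_self A]
      exact measure_union_le _ _
    have h3 : μ Aᶜ ≤ F n := by
      rw [hAdef, Set.compl_inter, compl_compl]
      refine le_trans (measure_union_le _ _) ?_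
      rw [hPgc, zero_add]
      exact hBadle n
    have h4 : (1:ℝ≥0∞) ≤ μ A + F n := le_trans h2 (add_le_add le_rfl h3)
    have h5 : 1 - F n ≤ μ A := tsub_le_iff_right.mpr h4
    exact le_trans h5 (measure_mono hsub)
  have hlowt : Tendsto (fun n : ℕ => (1:ℝ≥0∞) - F n) atTop (nhds 1) := by
    have h := ENNReal.Tendsto.sub (tendsto_const_nhds (x := (1:ℝ≥0∞)) (f := atTop)) hFt
      (Or.inl ENNReal.one_ne_top)
    simpa using h
  refine tendsto_of_tendsto_of_tendsto_of_le_of_le' hlowt tendsto_const_nhds ?_ ?_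
  · filter_upwards [eventually_ge_atTop 1] with n hn
    exact hmain n hn
  · exact Filter.Eventually.of_forall fun n => prob_le_one
end

section
/- Let μ ∈ ℝ, σ > 0, α ≥ 0, and let f(y) = (2πσ²)^{−1/2} exp(−(y−μ)²/(2σ²)) be the N(μ, σ²) density, whose score with respect to σ is u_σ(y) = (y−μ)²/σ³ − 1/σ. Then ∫_ℝ f(y)^{1+α} u_σ(y)² dy = (2π)^{−α/2} σ^{−(α+2)} (1+α)^{−1/2} [3/(1+α)² − 2/(1+α) + 1]. -/
open MeasureTheory Real


lemma integrable_pow_gauss {b : ℝ} (hb : 0 < b) (n : ℕ) :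
    Integrable fun x : ℝ => x ^ n * Real.exp (-b * x ^ 2) := by
  have h : (-1 : ℝ) < (n : ℝ) := lt_of_lt_of_le (by norm_num) (Nat.cast_nonneg n)
  have := integrable_rpow_mul_exp_neg_mul_sq hb h
  simpa [Real.rpow_natCast] using this

lemma moment2_gauss {b : ℝ} (hb : 0 < b) :
    ∫ x : ℝ, x ^ 2 * Real.exp (-b * x ^ 2) = Real.sqrt (π / b) / (2 * b) := by
  have hderiv : ∀ x : ℝ, HasDerivAt (fun x : ℝ => x * Real.exp (-b * x ^ 2))
      (Real.exp (-b * x ^ 2) - 2 * b * (x ^ 2 * Real.exp (-b * x ^ 2))) x := by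
    intro x
    have h1 : HasDerivAt (fun x : ℝ => -b * x ^ 2) (-b * (2 * x)) x := by
      simpa using ((hasDerivAt_pow 2 x).const_mul (-b))
    have : HasDerivAt (fun y : ℝ => id y * Real.exp (-b * y ^ 2))
        (1 * Real.exp (-b * x ^ 2) + x * (Real.exp (-b * x ^ 2) * (-b * (2 * x)))) x :=
      (hasDerivAt_id x).fun_mul h1.exp
    convert this using 1
    simp only [id_eq]
    ring
  have hint : Integrable fun x : ℝ =>
      Real.exp (-b * x ^ 2) - 2 * b * (x ^ 2 * Real.exp (-b * x ^ 2)) :=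
    (integrable_exp_neg_mul_sq hb).sub (((integrable_pow_gauss hb 2)).const_mul _)
  have hf : Integrable fun x : ℝ => x * Real.exp (-b * x ^ 2) :=
    integrable_mul_exp_neg_mul_sq hb
  have h0 := integral_eq_zero_of_hasDerivAt_of_integrable hderiv hint hf
  rw [integral_sub (integrable_exp_neg_mul_sq hb)
      ((integrable_pow_gauss hb 2).const_mul _), MeasureTheory.integral_const_mul,
      integral_gaussian] at h0
  have hb' : (2 : ℝ) * b ≠ 0 := by positivity
  field_simp at h0 ⊢
  linarith

lemma moment4_gauss {b : ℝ} (hb : 0 < b) :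
    ∫ x : ℝ, x ^ 4 * Real.exp (-b * x ^ 2) = 3 * Real.sqrt (π / b) / (4 * b ^ 2) := by
  have hderiv : ∀ x : ℝ, HasDerivAt (fun x : ℝ => x ^ 3 * Real.exp (-b * x ^ 2))
      (3 * (x ^ 2 * Real.exp (-b * x ^ 2)) - 2 * b * (x ^ 4 * Real.exp (-b * x ^ 2))) x := by
    intro x
    have h1 : HasDerivAt (fun x : ℝ => -b * x ^ 2) (-b * (2 * x)) x := by
      simpa using ((hasDerivAt_pow 2 x).const_mul (-b))
    have : HasDerivAt (fun y : ℝ => y ^ 3 * Real.exp (-b * y ^ 2))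
        (((3 : ℕ) : ℝ) * x ^ (3 - 1) * Real.exp (-b * x ^ 2)
          + x ^ 3 * (Real.exp (-b * x ^ 2) * (-b * (2 * x)))) x :=
      (hasDerivAt_pow 3 x).fun_mul h1.exp
    convert this using 1
    ring
  have hint : Integrable fun x : ℝ =>
      3 * (x ^ 2 * Real.exp (-b * x ^ 2)) - 2 * b * (x ^ 4 * Real.exp (-b * x ^ 2)) :=
    ((integrable_pow_gauss hb 2).const_mul _).sub ((integrable_pow_gauss hb 4).const_mul _)
  have h0 := integral_eq_zero_of_hasDerivAt_of_integrable hderiv hint (integrable_pow_gauss hb 3)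
  rw [integral_sub ((integrable_pow_gauss hb 2).const_mul _)
      ((integrable_pow_gauss hb 4).const_mul _), MeasureTheory.integral_const_mul,
      MeasureTheory.integral_const_mul, moment2_gauss hb] at h0
  have hb' : (2 : ℝ) * b ≠ 0 := by positivity
  field_simp at h0 ⊢
  linarith

/-- For the `N(μ, σ²)` density `f` with score in `σ` given by
`u_σ(y) = (y-μ)²/σ³ - 1/σ`, one has
`∫ f(y)^{1+α} u_σ(y)² dy = (2π)^{-α/2} σ^{-(α+2)} (1+α)^{-1/2} [3/(1+α)² - 2/(1+α) + 1]`. -/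
theorem stmt_15 (μ σ α : ℝ) (hσ : 0 < σ) (hα : 0 ≤ α) :
    ∫ y : ℝ,
        ((2 * π * σ ^ 2) ^ (-(1 : ℝ) / 2) * Real.exp (-(y - μ) ^ 2 / (2 * σ ^ 2)))
            ^ (1 + α) * ((y - μ) ^ 2 / σ ^ 3 - 1 / σ) ^ 2
      = (2 * π) ^ (-α / 2) * σ ^ (-(α + 2)) * (1 + α) ^ (-(1 : ℝ) / 2)
          * (3 / (1 + α) ^ 2 - 2 / (1 + α) + 1) := by
  have hs : (0:ℝ) < 1 + α := by linarith
  have hσ' : σ ≠ 0 := ne_of_gt hσ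
  set b : ℝ := (1 + α) / (2 * σ ^ 2) with hbdef
  have hb : 0 < b := by positivity
  have h2πσ : (0:ℝ) < 2 * π * σ ^ 2 := by positivity
  have key : ∀ y : ℝ,
      ((2 * π * σ ^ 2) ^ (-(1 : ℝ) / 2) * Real.exp (-(y - μ) ^ 2 / (2 * σ ^ 2)))
            ^ (1 + α) * ((y - μ) ^ 2 / σ ^ 3 - 1 / σ) ^ 2
      = (2 * π * σ ^ 2) ^ (-(1 + α) / 2) *
          ((1 / σ ^ 6) * ((y - μ) ^ 4 * Real.exp (-b * (y - μ) ^ 2))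
            - (2 / σ ^ 4) * ((y - μ) ^ 2 * Real.exp (-b * (y - μ) ^ 2))
            + (1 / σ ^ 2) * Real.exp (-b * (y - μ) ^ 2)) := by
    intro y
    rw [Real.mul_rpow (Real.rpow_nonneg h2πσ.le _) (Real.exp_pos _).le,
        ← Real.rpow_mul h2πσ.le, ← Real.exp_mul]
    have e1 : -(y - μ) ^ 2 / (2 * σ ^ 2) * (1 + α) = -b * (y - μ) ^ 2 := by
      rw [hbdef]; field_simp
    have e2 : -(1:ℝ) / 2 * (1 + α) = -(1 + α) / 2 := by ring
    rw [e1, e2]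
    field_simp
    ring
  simp_rw [key]
  rw [MeasureTheory.integral_const_mul]
  have hcov : (∫ y : ℝ,
        ((1 / σ ^ 6) * ((y - μ) ^ 4 * Real.exp (-b * (y - μ) ^ 2))
          - (2 / σ ^ 4) * ((y - μ) ^ 2 * Real.exp (-b * (y - μ) ^ 2))
          + (1 / σ ^ 2) * Real.exp (-b * (y - μ) ^ 2)))
      = ∫ x : ℝ,
        ((1 / σ ^ 6) * (x ^ 4 * Real.exp (-b * x ^ 2))
          - (2 / σ ^ 4) * (x ^ 2 * Real.exp (-b * x ^ 2))
          + (1 / σ ^ 2) * Real.exp (-b * x ^ 2)) :=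
    integral_sub_right_eq_self (fun x : ℝ =>
        (1 / σ ^ 6) * (x ^ 4 * Real.exp (-b * x ^ 2))
          - (2 / σ ^ 4) * (x ^ 2 * Real.exp (-b * x ^ 2))
          + (1 / σ ^ 2) * Real.exp (-b * x ^ 2)) μ
  rw [hcov]
  have hint1 : Integrable (fun x : ℝ => (1 / σ ^ 6) * (x ^ 4 * Real.exp (-b * x ^ 2))
      - (2 / σ ^ 4) * (x ^ 2 * Real.exp (-b * x ^ 2))) := by
    exact ((integrable_pow_gauss hb 4).const_mul _).sub
      ((integrable_pow_gauss hb 2).const_mul _)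
  have hint2 : Integrable (fun x : ℝ => (1 / σ ^ 2) * Real.exp (-b * x ^ 2)) := by
    exact (integrable_exp_neg_mul_sq hb).const_mul _
  have hint3 : Integrable (fun x : ℝ => (1 / σ ^ 6) * (x ^ 4 * Real.exp (-b * x ^ 2))) := by
    exact (integrable_pow_gauss hb 4).const_mul _
  have hint4 : Integrable (fun x : ℝ => (2 / σ ^ 4) * (x ^ 2 * Real.exp (-b * x ^ 2))) := by
    exact (integrable_pow_gauss hb 2).const_mul _
  rw [integral_add hint1 hint2, integral_sub hint3 hint4,
      MeasureTheory.integral_const_mul, MeasureTheory.integral_const_mul,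
      MeasureTheory.integral_const_mul,
      moment2_gauss hb, moment4_gauss hb, integral_gaussian]
  -- now pure algebra
  have hR : Real.sqrt (π / b) = (2 * π) ^ ((1:ℝ)/2) * σ * (1 + α) ^ (-(1:ℝ)/2) := by
    have h1 : π / b = (2 * π) * σ ^ 2 / (1 + α) := by
      rw [hbdef]; field_simp
    rw [h1, Real.sqrt_eq_rpow, Real.div_rpow (by positivity) hs.le,
        Real.mul_rpow (by positivity) (by positivity)]
    have h2 : ((σ ^ 2 : ℝ)) ^ ((1:ℝ)/2) = σ := by
      rw [← Real.sqrt_eq_rpow]; exact Real.sqrt_sq hσ.le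
    rw [h2, div_eq_mul_inv, ← Real.rpow_neg hs.le]
    ring_nf
  have hC : (2 * π * σ ^ 2 : ℝ) ^ (-(1 + α) / 2)
      = (2 * π) ^ (-α / 2) * ((2 * π) ^ ((1:ℝ)/2))⁻¹ * (σ ^ (-(α + 2)) * σ ^ (1:ℝ)) := by
    rw [Real.mul_rpow (by positivity) (by positivity)]
    congr 1
    · rw [← Real.rpow_neg (by positivity : (0:ℝ) ≤ 2 * π),
          ← Real.rpow_add (by positivity : (0:ℝ) < 2 * π)]
      congr 1; ring
    · rw [← Real.rpow_natCast σ 2, ← Real.rpow_mul hσ.le,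
          ← Real.rpow_add hσ]
      congr 1; push_cast; ring
  rw [hR, hC, Real.rpow_one]
  have h2π : (0:ℝ) < (2 * π) ^ ((1:ℝ)/2) := Real.rpow_pos_of_pos (by positivity) _
  rw [hbdef]
  field_simp
  ring
end
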